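/- arXiv:1211.3605 — 8 statements merged into one kernel-verified Lean document; each statement's English description precedes it below -/
import Mathlib

section
/- Let A ∈ gl_n(ℝ) and define B = -tr(S(A)²)·A + (1/2)[A,[A,Aᵗ]] - (1/2)tr(A)·[A,Aᵗ], where S(A) = (A+Aᵗ)/2. Then ⟨A, B⟩ = -tr(S(A)²)·‖A‖² - (1/2)‖[A,Aᵗ]‖², where ⟨X,Y⟩ = tr(XYᵗ). In particular ⟨A,B⟩ ≤ 0. -/
open Matrix Filter

noncomputable section

abbrev Mat (n : ℕ) := Matrix (Fin n) (Fin n) ℝ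

/-- Commutator bracket of matrices. -/
def bkt {n : ℕ} (X Y : Mat n) : Mat n := X * Y - Y * X

/-- Frobenius inner product ⟨X,Y⟩ = tr(XYᵗ). -/
def frob {n : ℕ} (X Y : Mat n) : ℝ := Matrix.trace (X * Yᵀ)

/-- Squared Frobenius norm ‖X‖² = tr(XXᵗ). -/
def sqnorm {n : ℕ} (X : Mat n) : ℝ := frob X X

/-- Symmetric part S(X) = (X+Xᵗ)/2. -/
def symPart {n : ℕ} (X : Mat n) : Mat n := (1/2 : ℝ) • (X + Xᵀ)

/-- Right-hand side of the bracket flow ODE. -/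
def rhs {n : ℕ} (A : Mat n) : Mat n :=
  (-(Matrix.trace (symPart A * symPart A))) • A
    + (1/2 : ℝ) • bkt A (bkt A Aᵀ)
    - ((1/2 : ℝ) * Matrix.trace A) • bkt A Aᵀ


lemma frob_add {n : ℕ} (X Y Z : Mat n) : frob X (Y + Z) = frob X Y + frob X Z := by
  simp [frob, transpose_add, mul_add]

lemma frob_sub {n : ℕ} (X Y Z : Mat n) : frob X (Y - Z) = frob X Y - frob X Z := by
  simp [frob, transpose_sub, mul_sub]

lemma frob_smul {n : ℕ} (c : ℝ) (X Y : Mat n) : frob X (c • Y) = c * frob X Y := by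
  simp [frob, transpose_smul, mul_smul_comm]

lemma sqnorm_eq_sum {n : ℕ} (X : Mat n) : sqnorm X = ∑ i, ∑ j, X i j ^ 2 := by
  simp [sqnorm, frob, Matrix.trace, Matrix.mul_apply, Matrix.diag, sq]

lemma sqnorm_nonneg {n : ℕ} (X : Mat n) : 0 ≤ sqnorm X := by
  rw [sqnorm_eq_sum]
  exact Finset.sum_nonneg fun i _ => Finset.sum_nonneg fun j _ => sq_nonneg _

lemma frob_A_C {n : ℕ} (A : Mat n) : frob A (bkt A Aᵀ) = 0 := by
  simp only [frob, bkt, transpose_sub, transpose_mul, transpose_transpose, mul_sub]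
  rw [Matrix.trace_sub, ← mul_assoc, ← mul_assoc, Matrix.trace_mul_cycle A Aᵀ A]
  ring

lemma frob_A_CC {n : ℕ} (A : Mat n) :
    frob A (bkt A (bkt A Aᵀ)) = - sqnorm (bkt A Aᵀ) := by
  set C := bkt A Aᵀ with hC
  have hCt : Cᵀ = C := by
    simp [hC, bkt, transpose_sub, transpose_mul, transpose_transpose]
  simp only [frob, bkt, transpose_sub, transpose_mul, hCt, mul_sub]
  rw [Matrix.trace_sub, ← mul_assoc, ← mul_assoc, Matrix.trace_mul_cycle A C Aᵀ]
  have h1 : sqnorm C = Matrix.trace (C * C) := by rw [sqnorm, frob, hCt]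
  have h2 : Aᵀ * A * C - A * Aᵀ * C = -(C * C) := by
    rw [hC]; simp only [bkt]; noncomm_ring
  have := congrArg Matrix.trace h2
  rw [Matrix.trace_sub, Matrix.trace_neg] at this
  rw [this, h1]

lemma sq_trace_symm {n : ℕ} (A : Mat n) :
    0 ≤ Matrix.trace (symPart A * symPart A) := by
  have hs : (symPart A)ᵀ = symPart A := by
    simp [symPart, transpose_smul, transpose_add, add_comm]
  have : Matrix.trace (symPart A * symPart A) = sqnorm (symPart A) := by
    rw [sqnorm, frob, hs]
  rw [this]; exact sqnorm_nonneg _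

theorem stmt0 {n : ℕ} (A : Mat n) :
    frob A (rhs A)
      = -(Matrix.trace (symPart A * symPart A)) * sqnorm A
          - (1/2) * sqnorm (bkt A Aᵀ) ∧
    frob A (rhs A) ≤ 0 := by
  have key : frob A (rhs A)
      = -(Matrix.trace (symPart A * symPart A)) * sqnorm A
          - (1/2) * sqnorm (bkt A Aᵀ) := by
    rw [rhs, frob_sub, frob_add, frob_smul, frob_smul, frob_smul,
      frob_A_CC, frob_A_C]
    rw [show frob A A = sqnorm A from rfl]
    ring
  refine ⟨key, ?_⟩
  rw [key]
  have h1 := sq_trace_symm A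
  have h2 := sqnorm_nonneg A
  have h3 := sqnorm_nonneg (bkt A Aᵀ)
  nlinarith
end
end

section
/- Let B ∈ gl_n(ℝ) satisfy [B,[B,Bᵗ]] = c·B for some nonzero real number c. Then tr(Bᵏ) = 0 for all k ≥ 1; in particular B is nilpotent. -/
open Matrix Filter

noncomputable section

/-
With `X = [B, Bᵀ]`, the trace of `[B, X] * B ^ (k - 1)` vanishes because `B ^ (k - 1)` commutes
with `B`, while the hypothesis turns it into `c * tr (B ^ k)`. For nilpotency, pass to an
algebraically closed field of characteristic zero: there `tr (f ^ k) = ∑ μ, d μ * μ ^ k`, with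
`d μ` the dimension of the generalized `μ`-eigenspace. Combining these identities with the
coefficients of `T * ∏ ν ≠ μ, (T - ν)`, which has no constant term and vanishes at every
eigenvalue but `μ`, gives `d μ = 0` for each `μ ≠ 0`; so everything is the generalized
`0`-eigenspace.
-/

open Polynomial in
theorem Finset.eq_zero_of_forall_sum_mul_pow_eq_zero {R : Type*} [CommRing R] [IsDomain R]
    {s : Finset R} {w : R → R} (h : ∀ k : ℕ, 1 ≤ k → ∑ ν ∈ s, w ν * ν ^ k = 0)
    {μ : R} (hμs : μ ∈ s) (hμ : μ ≠ 0) : w μ = 0 := by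
  classical
  set q : R[X] := ∏ ν ∈ s.erase μ, (X - C ν)
  have hsum : ∑ ν ∈ s, w ν * ν * q.eval ν = 0 := by
    have hexpand : ∀ ν, w ν * ν * q.eval ν
        = ∑ j ∈ range (q.natDegree + 1), q.coeff j * (w ν * ν ^ (j + 1)) := fun ν => by
      rw [eval_eq_sum_range, Finset.mul_sum]
      exact Finset.sum_congr rfl fun j _ => by ring
    simp_rw [hexpand]
    rw [Finset.sum_comm]
    exact Finset.sum_eq_zero fun j _ => by rw [← Finset.mul_sum, h (j + 1) (by omega), mul_zero]
  have hq_ne : q.eval μ ≠ 0 := by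
    rw [eval_prod, Finset.prod_ne_zero_iff]
    intro ν hν
    simpa [sub_eq_zero] using (Finset.ne_of_mem_erase hν).symm
  rw [Finset.sum_eq_single_of_mem μ hμs fun ν hν hνμ => by
    rw [eval_prod, Finset.prod_eq_zero (Finset.mem_erase.mpr ⟨hνμ, hν⟩) (by simp), mul_zero]]
    at hsum
  simpa [hμ, hq_ne] using hsum

theorem LinearMap.trace_pow_eq_of_isNilpotent_sub_algebraMap {R M : Type*} [CommRing R]
    [IsReduced R] [AddCommGroup M] [Module R M] [Module.Free R M] [Module.Finite R M]
    {g : Module.End R M} (μ : R) (hg : IsNilpotent (g - algebraMap R _ μ)) (k : ℕ) :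
    trace R M (g ^ k) = μ ^ k * Module.finrank R M := by
  induction k with
  | zero => simp
  | succ k ih =>
    rw [pow_succ, Module.End.mul_eq_comp,
      trace_comp_eq_mul_of_commute_of_isNilpotent μ ((Commute.refl g).pow_left k) hg, ih]
    ring

open Module in
theorem Module.End.trace_pow_eq_sum_finrank_maxGenEigenspace_mul_pow {K V : Type*} [Field K]
    [IsAlgClosed K] [AddCommGroup V] [Module K V] [FiniteDimensional K V] (f : End K V)
    {s : Finset K} (hs : ∀ μ, f.maxGenEigenspace μ ≠ ⊥ → μ ∈ s) (k : ℕ) :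
    LinearMap.trace K V (f ^ k) = ∑ μ ∈ s, (finrank K (f.maxGenEigenspace μ) : K) * μ ^ k := by
  classical
  have hindep := f.independent_maxGenEigenspace
  have hN := WellFoundedGT.finite_ne_bot_of_iSupIndep hindep
  have hds := DirectSum.isInternal_submodule_of_iSupIndep_of_iSup_eq_top hindep
    f.iSup_maxGenEigenspace_eq_top
  have hmaps : ∀ (j : ℕ) (μ : K),
      Set.MapsTo (f ^ j) (f.maxGenEigenspace μ) (f.maxGenEigenspace μ) :=
    fun j => f.mapsTo_maxGenEigenspace_of_comm ((Commute.refl f).pow_right j)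
  rw [LinearMap.trace_eq_sum_trace_restrict' hds hN (hmaps k)]
  refine Finset.sum_subset_zero_on_sdiff (fun μ hμ => hs μ (by simpa using hμ))
    (fun μ hμ => ?_) (fun μ _ => ?_)
  · have hbot : f.maxGenEigenspace μ = ⊥ := by simpa using (Finset.mem_sdiff.mp hμ).2
    rw [hbot, finrank_bot, Nat.cast_zero, zero_mul]
  · rw [← Module.End.pow_restrict k (f.mapsTo_maxGenEigenspace_of_comm rfl μ), mul_comm]
    exact LinearMap.trace_pow_eq_of_isNilpotent_sub_algebraMap μ
      (f.isNilpotent_restrict_maxGenEigenspace_sub_algebraMap μ) k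

theorem Module.End.isNilpotent_of_maxGenEigenspace_zero_eq_top {K V : Type*} [Field K]
    [AddCommGroup V] [Module K V] [FiniteDimensional K V] {f : End K V}
    (h : f.maxGenEigenspace 0 = ⊤) : IsNilpotent f := by
  refine ((LinearMap.charpoly_nilpotent_tfae f).out 2 0).mp fun m => ?_
  obtain ⟨k, hk⟩ := (mem_maxGenEigenspace f 0 m).mp (h ▸ Submodule.mem_top)
  exact ⟨k, by simpa using hk⟩

open Module in
theorem Module.End.isNilpotent_of_forall_trace_pow_eq_zero {K V : Type*} [Field K]
    [IsAlgClosed K] [CharZero K] [AddCommGroup V] [Module K V] [FiniteDimensional K V]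
    (f : End K V) (h : ∀ k : ℕ, 1 ≤ k → LinearMap.trace K V (f ^ k) = 0) : IsNilpotent f := by
  have hN := WellFoundedGT.finite_ne_bot_of_iSupIndep f.independent_maxGenEigenspace
  have hbot : ∀ μ ≠ 0, f.maxGenEigenspace μ = ⊥ := by
    intro μ hμ
    by_contra hne
    have hrank := Finset.eq_zero_of_forall_sum_mul_pow_eq_zero
      (w := fun ν => (finrank K (f.maxGenEigenspace ν) : K))
      (fun k hk => by
        rw [← f.trace_pow_eq_sum_finrank_maxGenEigenspace_mul_pow (s := hN.toFinset)
          (fun ν hν => by simpa using hν)]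
        exact h k hk)
      (by simpa using hne) hμ
    exact hne (Submodule.finrank_eq_zero.mp (by exact_mod_cast hrank))
  refine isNilpotent_of_maxGenEigenspace_zero_eq_top (eq_top_iff.mpr ?_)
  rw [← f.iSup_maxGenEigenspace_eq_top]
  refine iSup_le fun μ => ?_
  rcases eq_or_ne μ 0 with rfl | hμ
  · exact le_rfl
  · exact (hbot μ hμ).symm ▸ bot_le

theorem Matrix.isNilpotent_of_forall_trace_pow_eq_zero {n K : Type*} [Fintype n] [DecidableEq n]
    [Field K] [CharZero K] (A : Matrix n n K) (h : ∀ k : ℕ, 1 ≤ k → (A ^ k).trace = 0) :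
    IsNilpotent A := by
  let φ := (algebraMap K (AlgebraicClosure K)).mapMatrix (m := n)
  rw [← IsNilpotent.map_iff (f := φ) (Matrix.map_injective (algebraMap K _).injective),
    ← isNilpotent_toLin'_iff]
  refine Module.End.isNilpotent_of_forall_trace_pow_eq_zero _ fun k hk => ?_
  rw [← toLin'_pow, LinearMap.trace_eq_matrix_trace _ (Pi.basisFun _ n),
    LinearMap.toMatrix_eq_toMatrix', LinearMap.toMatrix'_toLin', ← map_pow,
    RingHom.mapMatrix_apply, ← AddMonoidHom.map_trace, h k hk, map_zero]

theorem Matrix.trace_pow_eq_zero_of_commutator_eq_smul {n R : Type*} [Fintype n] [DecidableEq n]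
    [CommRing R] [NoZeroDivisors R] {B X : Matrix n n R} {c : R} (hc : c ≠ 0)
    (h : B * X - X * B = c • B) {k : ℕ} (hk : 1 ≤ k) : (B ^ k).trace = 0 := by
  obtain ⟨j, rfl⟩ : ∃ j, k = j + 1 := ⟨k - 1, by omega⟩
  have htrace_commutator : ((B * X - X * B) * B ^ j).trace = 0 := by
    rw [Matrix.sub_mul, trace_sub, Matrix.mul_assoc, trace_mul_comm B, Matrix.mul_assoc,
      Matrix.mul_assoc, ← pow_succ, ← pow_succ', sub_self]
  rw [h, smul_mul, trace_smul, ← pow_succ', smul_eq_mul] at htrace_commutator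
  exact (mul_eq_zero.mp htrace_commutator).resolve_left hc

theorem stmt3 {n : ℕ} (B : Mat n) (c : ℝ) (hc : c ≠ 0)
    (h : bkt B (bkt B Bᵀ) = c • B) :
    (∀ k : ℕ, 1 ≤ k → Matrix.trace (B ^ k) = 0) ∧ IsNilpotent B := by
  have htrace : ∀ k : ℕ, 1 ≤ k → Matrix.trace (B ^ k) = 0 := fun _ hk =>
    Matrix.trace_pow_eq_zero_of_commutator_eq_smul hc h hk
  exact ⟨htrace, B.isNilpotent_of_forall_trace_pow_eq_zero htrace⟩
end
end

section
/- Let B ∈ gl_n(ℝ) satisfy [B,[B,Bᵗ]] = 0. Then [B,Bᵗ] = 0, i.e. B is a normal matrix. -/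
open Matrix Filter

noncomputable section

lemma trace_self_mul_transpose_eq_zero {n : ℕ} (A : Mat n)
    (h : Matrix.trace (A * Aᵀ) = 0) : A = 0 := by
  have htr : Matrix.trace (A * Aᵀ) = ∑ i, ∑ j, A i j * A i j := by
    simp [Matrix.trace, Matrix.mul_apply, Matrix.diag, Matrix.transpose_apply]
  rw [htr] at h
  ext i j
  have h1 := (Finset.sum_eq_zero_iff_of_nonneg (fun i _ =>
    Finset.sum_nonneg fun j _ => mul_self_nonneg (A i j))).mp h i (Finset.mem_univ i)
  have h2 := (Finset.sum_eq_zero_iff_of_nonneg (fun j _ =>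
    mul_self_nonneg (A i j))).mp h1 j (Finset.mem_univ j)
  simpa using mul_self_eq_zero.mp h2

theorem stmt4 {n : ℕ} (B : Mat n) (h : bkt B (bkt B Bᵀ) = 0) :
    bkt B Bᵀ = 0 := by
  set C := bkt B Bᵀ with hC
  have hcomm : B * C = C * B := by
    have := sub_eq_zero.mp h
    simpa [bkt] using this
  have hsym : Cᵀ = C := by
    simp [hC, bkt, Matrix.transpose_sub, Matrix.transpose_mul]
  have htr : Matrix.trace (C * Cᵀ) = 0 := by
    rw [hsym, hC]
    show Matrix.trace ((B * Bᵀ - Bᵀ * B) * C) = 0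
    have key : Matrix.trace (Bᵀ * B * C) = Matrix.trace (B * Bᵀ * C) := by
      calc Matrix.trace (Bᵀ * B * C) = Matrix.trace (Bᵀ * (B * C)) := by rw [mul_assoc]
        _ = Matrix.trace (Bᵀ * (C * B)) := by rw [hcomm]
        _ = Matrix.trace (B * Bᵀ * C) := by
            rw [Matrix.trace_mul_comm, mul_assoc, Matrix.trace_mul_comm]
    rw [Matrix.sub_mul, Matrix.trace_sub, key, sub_self]
  exact trace_self_mul_transpose_eq_zero C htr
end
end

section
/- For any B ∈ gl_n(ℝ), the Cauchy–Schwarz-type inequality ‖[B,Bᵗ]‖⁴ ≤ ‖B‖² · ‖[B,[B,Bᵗ]]‖² holds, where ‖·‖ is the Frobenius norm. -/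
open Matrix Filter

noncomputable section

lemma frob_eq_sum {n : ℕ} (X Y : Mat n) :
    frob X Y = ∑ p : Fin n × Fin n, X p.1 p.2 * Y p.1 p.2 := by
  simp [frob, Matrix.trace, Matrix.diag, Matrix.mul_apply, Fintype.sum_prod_type]

lemma cs {n : ℕ} (X Y : Mat n) : (frob X Y)^2 ≤ sqnorm X * sqnorm Y := by
  simp only [sqnorm, frob_eq_sum, ← sq]
  exact Finset.sum_mul_sq_le_sq_mul_sq _ _ _

lemma key {n : ℕ} (B : Mat n) : frob B (bkt B (bkt B Bᵀ)) = - sqnorm (bkt B Bᵀ) := by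
  simp only [frob, sqnorm, bkt, Matrix.transpose_sub, Matrix.transpose_mul,
    Matrix.transpose_transpose, mul_sub, sub_mul, Matrix.trace_sub, mul_assoc]
  have t1 := Matrix.trace_mul_cycle B Bᵀ (B * Bᵀ)
  have t2 := Matrix.trace_mul_cycle B Bᵀ (Bᵀ * B)
  have t3 := Matrix.trace_mul_cycle B (B * Bᵀ) Bᵀ
  have t4 := Matrix.trace_mul_cycle B (Bᵀ * B) Bᵀ
  simp only [mul_assoc] at *
  ring_nf
  linarith

theorem stmt5 {n : ℕ} (B : Mat n) :
    sqnorm (bkt B Bᵀ) ^ 2 ≤ sqnorm B * sqnorm (bkt B (bkt B Bᵀ)) := by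
  have h := cs B (bkt B (bkt B Bᵀ))
  rw [key] at h
  simpa using h
end
end

section
/- A matrix A ∈ gl_n(ℝ) is a fixed point of the equation A' = -tr(S(A)²)·A + (1/2)[A,[A,Aᵗ]] - (1/2)tr(A)·[A,Aᵗ] (i.e. the right-hand side vanishes at A) if and only if A is skew-symmetric. -/
open Matrix Filter

noncomputable section

lemma trace_mul_transpose_eq_sum {n : ℕ} (X : Mat n) :
    Matrix.trace (X * Xᵀ) = ∑ i, ∑ j, (X i j)^2 := by
  simp [Matrix.trace, Matrix.diag, Matrix.mul_apply, sq]

lemma trace_mul_transpose_nonneg {n : ℕ} (X : Mat n) :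
    0 ≤ Matrix.trace (X * Xᵀ) := by
  rw [trace_mul_transpose_eq_sum]; positivity

lemma eq_zero_of_trace_mul_transpose {n : ℕ} (X : Mat n)
    (h : Matrix.trace (X * Xᵀ) = 0) : X = 0 := by
  rw [trace_mul_transpose_eq_sum] at h
  ext i j
  have h1 : ∀ i ∈ (Finset.univ : Finset (Fin n)), 0 ≤ ∑ j, (X i j)^2 := by
    intro i _; positivity
  have h2 := (Finset.sum_eq_zero_iff_of_nonneg h1).mp h i (Finset.mem_univ i)
  have h3 : ∀ j ∈ (Finset.univ : Finset (Fin n)), (0:ℝ) ≤ (X i j)^2 := by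
    intro j _; positivity
  have := (Finset.sum_eq_zero_iff_of_nonneg h3).mp h2 j (Finset.mem_univ j)
  simpa using pow_eq_zero_iff (n := 2) (by norm_num) |>.mp this

lemma key_identity {n : ℕ} (A : Mat n) :
  frob A (rhs A) = -(Matrix.trace (symPart A * symPart A)) * Matrix.trace (A * Aᵀ)
    - (1/2) * Matrix.trace ((A*Aᵀ - Aᵀ*A) * (A*Aᵀ - Aᵀ*A)) := by
  have h1 : Matrix.trace (Aᵀ*(A*(A*Aᵀ))) = Matrix.trace (A*(A*(Aᵀ*Aᵀ))) := by
    simpa [mul_assoc] using Matrix.trace_mul_comm Aᵀ (A*(A*Aᵀ))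
  have h3 : Matrix.trace (Aᵀ*(A*(Aᵀ*A))) = Matrix.trace (A*(Aᵀ*(A*Aᵀ))) := by
    simpa [mul_assoc] using Matrix.trace_mul_comm Aᵀ (A*(Aᵀ*A))
  have h4 : Matrix.trace (A*(A*Aᵀ)) = Matrix.trace (A*(Aᵀ*A)) := by
    simpa [mul_assoc] using (Matrix.trace_mul_cycle A Aᵀ A).symm
  unfold frob rhs bkt symPart
  simp only [Matrix.transpose_add, Matrix.transpose_sub, Matrix.transpose_mul,
    Matrix.transpose_smul, Matrix.transpose_transpose, Matrix.mul_add, Matrix.add_mul,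
    Matrix.mul_sub, Matrix.sub_mul, Matrix.smul_mul, Matrix.mul_smul, Matrix.trace_add,
    Matrix.trace_sub, Matrix.trace_smul, Matrix.mul_assoc, smul_eq_mul]
  linear_combination (-1/2)*h1 + (1/2)*h3 + (-1/2)*(Matrix.trace A)*h4

theorem stmt12 {n : ℕ} (A : Mat n) :
    rhs A = 0 ↔ Aᵀ = -A := by
  constructor
  · intro h
    have hz : frob A (rhs A) = 0 := by simp [frob, h]
    rw [key_identity] at hz
    set S := symPart A with hS
    have hSsym : Sᵀ = S := by
      simp [hS, symPart, Matrix.transpose_add, Matrix.transpose_smul, add_comm]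
    have hCsym : (A*Aᵀ - Aᵀ*A)ᵀ = A*Aᵀ - Aᵀ*A := by
      simp [Matrix.transpose_sub, Matrix.transpose_mul]
    have hs : 0 ≤ Matrix.trace (S * S) := by
      have := trace_mul_transpose_nonneg S; rwa [hSsym] at this
    have ha : 0 ≤ Matrix.trace (A * Aᵀ) := trace_mul_transpose_nonneg A
    have hc : 0 ≤ Matrix.trace ((A*Aᵀ - Aᵀ*A) * (A*Aᵀ - Aᵀ*A)) := by
      have := trace_mul_transpose_nonneg (A*Aᵀ - Aᵀ*A); rwa [hCsym] at this
    have hsa : Matrix.trace (S * S) * Matrix.trace (A * Aᵀ) = 0 := by nlinarith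
    rcases mul_eq_zero.mp hsa with h0 | h0
    · have : S = 0 := by
        apply eq_zero_of_trace_mul_transpose
        rwa [hSsym]
      have hA : A + Aᵀ = 0 := by
        have := congrArg (fun M => (2:ℝ) • M) this
        simpa [hS, symPart, smul_smul] using this
      exact eq_neg_of_add_eq_zero_right hA
    · have : A = 0 := eq_zero_of_trace_mul_transpose A h0
      simp [this]
  · intro h
    simp [rhs, bkt, symPart, h, Matrix.mul_neg, Matrix.neg_mul]
end
end

section
/- Let A₀ ∈ gl_n(ℝ) be a normal matrix (i.e. [A₀,A₀ᵗ] = 0). Then A(t) = (2·tr(S(A₀)²)·t + 1)^{-1/2}·A₀ solves A' = -tr(S(A)²)·A + (1/2)[A,[A,Aᵗ]] - (1/2)tr(A)·[A,Aᵗ] with A(0) = A₀, on the interval where 2·tr(S(A₀)²)·t + 1 > 0. -/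
open Matrix Filter

noncomputable section

/-! Normality kills both brackets along the ray `a • A₀` (they scale by `a²` and `a³`), so the
flow reduces to the scalar equation `a' = -tr(S(A₀)²) a³`, whose solution with `a(0) = 1` is
`a(t) = (2 tr(S(A₀)²) t + 1)^(-1/2)`. -/

lemma symPart_smul {n : ℕ} (a : ℝ) (X : Mat n) : symPart (a • X) = a • symPart X := by
  simp only [symPart, transpose_smul, ← smul_add, smul_comm a]

lemma bkt_smul_smul {n : ℕ} (a b : ℝ) (X Y : Mat n) : bkt (a • X) (b • Y) = (a * b) • bkt X Y := by
  simp only [bkt, smul_mul_smul_comm, mul_comm b a, smul_sub]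

lemma rhs_smul_of_bkt_transpose_eq_zero {n : ℕ} {A : Mat n} (hA : bkt A Aᵀ = 0) (a : ℝ) :
    rhs (a • A) = (-(trace (symPart A * symPart A) * a ^ 3)) • A := by
  have hbkt : bkt (a • A) (a • A)ᵀ = 0 := by
    rw [transpose_smul, bkt_smul_smul, hA, smul_zero]
  rw [rhs, hbkt, bkt, symPart_smul, smul_mul_smul_comm, trace_smul]
  simp only [mul_zero, zero_mul, sub_zero, smul_zero, add_zero, smul_eq_mul, smul_smul]
  congr 1
  ring

lemma hasDerivAt_rpow_neg_half_affine {c t : ℝ} (ht : 0 < 2 * c * t + 1) :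
    HasDerivAt (fun s => (2 * c * s + 1) ^ (-(1/2) : ℝ))
      (-(c * ((2 * c * t + 1) ^ (-(1/2) : ℝ)) ^ 3)) t := by
  have hlin : HasDerivAt (fun s : ℝ => 2 * c * s + 1) (2 * c) t := by
    simpa using ((hasDerivAt_id t).const_mul (2 * c)).add_const 1
  convert hlin.rpow_const (p := -(1/2)) (Or.inl ht.ne') using 1
  rw [← Real.rpow_natCast, ← Real.rpow_mul ht.le,
    show (-(1/2) : ℝ) * (3 : ℕ) = -(1/2) - 1 by norm_num]
  ring

theorem stmt13 {n : ℕ} (A₀ : Mat n) (hnormal : bkt A₀ A₀ᵀ = 0) :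
    ((2 * Matrix.trace (symPart A₀ * symPart A₀) * (0:ℝ) + 1) ^ (-(1/2) : ℝ)) • A₀ = A₀ ∧
    ∀ t : ℝ, 0 < 2 * Matrix.trace (symPart A₀ * symPart A₀) * t + 1 →
      ∀ i j, HasDerivAt
        (fun s => ((2 * Matrix.trace (symPart A₀ * symPart A₀) * s + 1) ^ (-(1/2) : ℝ)) * A₀ i j)
        (rhs (((2 * Matrix.trace (symPart A₀ * symPart A₀) * t + 1) ^ (-(1/2) : ℝ)) • A₀) i j)
        t := by
  refine ⟨by norm_num, fun t ht i j => ?_⟩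
  rw [rhs_smul_of_bkt_transpose_eq_zero hnormal, Matrix.smul_apply, smul_eq_mul]
  exact (hasDerivAt_rpow_neg_half_affine ht).mul_const (A₀ i j)
end
end

section
/- Let A : ℝ → gl_n(ℝ) satisfy A' = -tr(S(A)²)·A + (1/2)[A,[A,Aᵗ]] - (1/2)tr(A)·[A,Aᵗ] with A(t) ≠ 0 for all t, and let B = A/‖A‖. Then (d/dt)tr(B) = (1/2)·‖A‖²·‖[B,Bᵗ]‖²·tr(B) and (d/dt)tr(B²) = ‖A‖²·‖[B,Bᵗ]‖²·tr(B²). In particular, the sign of tr(B(t)) and of tr(B(t)²) is constant along the flow. -/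
open Matrix Filter

noncomputable section

/-
Write k = tr(S(A)²) and C = ‖[A,Aᵀ]‖². By cyclicity of the trace the bracket terms of the flow
drop out of (tr A)' and (tr A²)', so (tr A)' = -k tr A and (tr A²)' = -2k tr A², while
⟨A', A⟩ = -k‖A‖² - C/2. In tr B = tr A · ‖A‖⁻¹ and tr B² = tr A² · ‖A‖⁻² the k-terms cancel,
leaving the linear equations y' = (C/2‖A‖²) y and y' = (C/‖A‖²) y. A solution of y' = c y with
continuous c is y(0) · exp ∫ c, so its sign never changes.
-/

lemma sqnorm_eq_trace_mul_conjTranspose {n : ℕ} (X : Mat n) : sqnorm X = trace (X * Xᴴ) := by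
  rw [conjTranspose_eq_transpose_of_trivial]; rfl

lemma sqnorm_pos {n : ℕ} {X : Mat n} (hX : X ≠ 0) : 0 < sqnorm X :=
  (sqnorm_nonneg X).lt_of_ne' <| by
    rwa [sqnorm_eq_trace_mul_conjTranspose, Ne, trace_mul_conjTranspose_self_eq_zero_iff]

lemma sqnorm_smul {n : ℕ} (c : ℝ) (X : Mat n) : sqnorm (c • X) = c ^ 2 * sqnorm X := by
  rw [sqnorm, frob, transpose_smul, Matrix.smul_mul, Matrix.mul_smul, smul_smul, trace_smul,
    smul_eq_mul, sq]
  rfl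

section Bracket

variable {n : ℕ}

lemma bkt_self (X : Mat n) : bkt X X = 0 := sub_self _

lemma bkt_swap (X Y : Mat n) : bkt Y X = -bkt X Y := (neg_sub _ _).symm

lemma transpose_bkt_self_transpose (X : Mat n) : (bkt X Xᵀ)ᵀ = bkt X Xᵀ := by
  simp [bkt, transpose_sub, transpose_mul]

lemma trace_bkt (X Y : Mat n) : trace (bkt X Y) = 0 := by
  rw [bkt, trace_sub, trace_mul_comm, sub_self]

lemma trace_bkt_mul (X Y Z : Mat n) : trace (bkt X Y * Z) = trace (Y * bkt Z X) := by
  simp only [bkt, sub_mul, Matrix.mul_sub, trace_sub, Matrix.mul_assoc]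
  rw [trace_mul_comm X, Matrix.mul_assoc]

lemma trace_bkt_mul_left (X Y : Mat n) : trace (bkt X Y * X) = 0 := by
  rw [trace_bkt_mul, bkt_self, Matrix.mul_zero, trace_zero]

lemma trace_bkt_mul_right (X Y : Mat n) : trace (bkt X Y * Y) = 0 := by
  rw [bkt_swap, Matrix.neg_mul, trace_neg, trace_bkt_mul_left, neg_zero]

lemma trace_bkt_bkt_mul_transpose (X : Mat n) :
    trace (bkt X (bkt X Xᵀ) * Xᵀ) = -sqnorm (bkt X Xᵀ) := by
  rw [trace_bkt_mul, bkt_swap X Xᵀ, Matrix.mul_neg, trace_neg, sqnorm, frob,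
    transpose_bkt_self_transpose]

end Bracket

section RhsTrace

variable {n : ℕ} (a : Mat n)

lemma trace_rhs :
    trace (rhs a) = -trace (symPart a * symPart a) * trace a := by
  simp only [rhs, trace_add, trace_sub, trace_smul, trace_bkt, smul_eq_mul]
  ring

lemma trace_rhs_mul_self :
    trace (rhs a * a) = -trace (symPart a * symPart a) * trace (a * a) := by
  simp only [rhs, add_mul, sub_mul, Matrix.smul_mul, trace_add, trace_sub, trace_smul,
    trace_bkt_mul_left, smul_eq_mul]
  ring

lemma trace_rhs_mul_transpose :
    trace (rhs a * aᵀ) =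
      -trace (symPart a * symPart a) * sqnorm a - (1/2) * sqnorm (bkt a aᵀ) := by
  simp only [rhs, add_mul, sub_mul, Matrix.smul_mul, trace_add, trace_sub, trace_smul,
    trace_bkt_mul_right, trace_bkt_bkt_mul_transpose, smul_eq_mul, sqnorm, frob]
  ring

end RhsTrace

section Calculus

variable {ι : Type*} [Fintype ι] {X Y : ℝ → Matrix ι ι ℝ} {X' Y' : Matrix ι ι ℝ} {t : ℝ}

lemma hasDerivAt_trace (hX : ∀ i j, HasDerivAt (fun s => X s i j) (X' i j) t) :
    HasDerivAt (fun s => trace (X s)) (trace X') t :=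
  HasDerivAt.fun_sum fun i _ => hX i i

lemma hasDerivAt_trace_mul (hX : ∀ i j, HasDerivAt (fun s => X s i j) (X' i j) t)
    (hY : ∀ i j, HasDerivAt (fun s => Y s i j) (Y' i j) t) :
    HasDerivAt (fun s => trace (X s * Y s)) (trace (X' * Y t) + trace (X t * Y')) t := by
  simp only [trace, diag, mul_apply, ← Finset.sum_add_distrib]
  exact HasDerivAt.fun_sum fun i _ => HasDerivAt.fun_sum fun j _ => (hX i j).mul (hY j i)

end Calculus

section Flow

variable {n : ℕ} {A : ℝ → Mat n} {t : ℝ}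

lemma hasDerivAt_trace_flow (hA : ∀ i j, HasDerivAt (fun s => A s i j) (rhs (A t) i j) t) :
    HasDerivAt (fun s => trace (A s)) (-trace (symPart (A t) * symPart (A t)) * trace (A t)) t :=
  trace_rhs (A t) ▸ hasDerivAt_trace hA

lemma hasDerivAt_trace_mul_self_flow
    (hA : ∀ i j, HasDerivAt (fun s => A s i j) (rhs (A t) i j) t) :
    HasDerivAt (fun s => trace (A s * A s))
      (-(2 * trace (symPart (A t) * symPart (A t))) * trace (A t * A t)) t := by
  refine (hasDerivAt_trace_mul hA hA).congr_deriv ?_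
  rw [trace_mul_comm (A t), trace_rhs_mul_self]
  ring

lemma hasDerivAt_sqnorm_flow (hA : ∀ i j, HasDerivAt (fun s => A s i j) (rhs (A t) i j) t) :
    HasDerivAt (fun s => sqnorm (A s))
      (-(2 * trace (symPart (A t) * symPart (A t)) * sqnorm (A t)) - sqnorm (bkt (A t) (A t)ᵀ))
      t := by
  have hAT : ∀ i j, HasDerivAt (fun s => (A s)ᵀ i j) ((rhs (A t))ᵀ i j) t := fun i j => hA j i
  refine (hasDerivAt_trace_mul hA hAT).congr_deriv ?_
  rw [← trace_transpose (A t * (rhs (A t))ᵀ), transpose_mul, transpose_transpose,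
    trace_rhs_mul_transpose]
  ring

end Flow

def normalized {n : ℕ} (X : Mat n) : Mat n := (Real.sqrt (sqnorm X))⁻¹ • X

section Normalized

variable {n : ℕ} (X : Mat n)

lemma trace_normalized : trace (normalized X) = trace X * sqnorm X ^ (-(1/2) : ℝ) := by
  rw [normalized, trace_smul, smul_eq_mul, Real.sqrt_eq_rpow, ← Real.rpow_neg (sqnorm_nonneg X),
    mul_comm]

lemma trace_normalized_mul_self :
    trace (normalized X * normalized X) = trace (X * X) * sqnorm X ^ (-1 : ℝ) := by
  rw [normalized, Matrix.smul_mul, Matrix.mul_smul, smul_smul, trace_smul, smul_eq_mul, ← mul_inv,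
    Real.mul_self_sqrt (sqnorm_nonneg X), Real.rpow_neg_one, mul_comm]

lemma sqnorm_mul_sqnorm_bkt_normalized :
    sqnorm X * sqnorm (bkt (normalized X) (normalized X)ᵀ) = sqnorm (bkt X Xᵀ) / sqnorm X := by
  have hbkt : bkt (normalized X) (normalized X)ᵀ = (sqnorm X)⁻¹ • bkt X Xᵀ := by
    simp only [normalized, bkt, transpose_smul, Matrix.smul_mul, Matrix.mul_smul, smul_smul,
      ← smul_sub]
    rw [← mul_inv, Real.mul_self_sqrt (sqnorm_nonneg X)]
  rw [hbkt, sqnorm_smul]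
  rcases (sqnorm_nonneg X).eq_or_lt with h | h
  · simp [← h]
  · field_simp

end Normalized

lemma HasDerivAt.mul_rpow_neg {x N : ℝ → ℝ} {k C p t : ℝ}
    (hx : HasDerivAt x (-(2 * p * k) * x t) t) (hN : HasDerivAt N (-(2 * k * N t) - C) t)
    (hNt : 0 < N t) :
    HasDerivAt (fun s => x s * N s ^ (-p)) (p * (C / N t) * (x t * N t ^ (-p))) t := by
  refine (hx.mul (hN.rpow_const (Or.inl hNt.ne'))).congr_deriv ?_
  rw [Real.rpow_sub_one hNt.ne']
  field_simp
  ring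

lemma Real.sign_mul_of_pos {x c : ℝ} (hc : 0 < c) : Real.sign (x * c) = Real.sign x := by
  rcases lt_trichotomy x 0 with h | rfl | h
  · rw [Real.sign_of_neg h, Real.sign_of_neg (mul_neg_of_neg_of_pos h hc)]
  · simp
  · rw [Real.sign_of_pos h, Real.sign_of_pos (mul_pos h hc)]

lemma Real.sign_eq_of_hasDerivAt_mul_self {y c : ℝ → ℝ} (hc : Continuous c)
    (hy : ∀ t, HasDerivAt y (c t * y t) t) (s t : ℝ) : Real.sign (y s) = Real.sign (y t) := by
  set g : ℝ → ℝ := fun u => y u * Real.exp (-∫ x in (0 : ℝ)..u, c x)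
  have hg : ∀ u, HasDerivAt g 0 u := fun u =>
    ((hy u).mul (hc.integral_hasStrictDerivAt 0 u).hasDerivAt.neg.exp).congr_deriv (by ring)
  have hconst : g s = g t :=
    is_const_of_deriv_eq_zero (fun u => (hg u).differentiableAt) (fun u => (hg u).deriv) s t
  calc Real.sign (y s) = Real.sign (g s) := (Real.sign_mul_of_pos (Real.exp_pos _)).symm
    _ = Real.sign (g t) := by rw [hconst]
    _ = Real.sign (y t) := Real.sign_mul_of_pos (Real.exp_pos _)

theorem stmt16 {n : ℕ} (A : ℝ → Mat n)
    (hA : ∀ t : ℝ, ∀ i j, HasDerivAt (fun s => A s i j) (rhs (A t) i j) t)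
    (hne : ∀ t : ℝ, A t ≠ 0)
    (B : ℝ → Mat n) (hB : ∀ t, B t = (Real.sqrt (sqnorm (A t)))⁻¹ • A t) :
    (∀ t : ℝ, HasDerivAt (fun s => Matrix.trace (B s))
      ((1/2) * sqnorm (A t) * sqnorm (bkt (B t) (B t)ᵀ) * Matrix.trace (B t)) t) ∧
    (∀ t : ℝ, HasDerivAt (fun s => Matrix.trace (B s * B s))
      (sqnorm (A t) * sqnorm (bkt (B t) (B t)ᵀ) * Matrix.trace (B t * B t)) t) ∧
    (∀ s t : ℝ, Real.sign (Matrix.trace (B s)) = Real.sign (Matrix.trace (B t)) ∧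
      Real.sign (Matrix.trace (B s * B s)) = Real.sign (Matrix.trace (B t * B t))) := by
  have hN : ∀ t, 0 < sqnorm (A t) := fun t => sqnorm_pos (hne t)
  obtain rfl : B = fun t => normalized (A t) := funext hB
  set c : ℝ → ℝ := fun t => sqnorm (bkt (A t) (A t)ᵀ) / sqnorm (A t)
  have hc : Continuous c := by
    have hAc : Continuous A := continuous_pi fun i => continuous_pi fun j =>
      continuous_iff_continuousAt.2 fun t => (hA t i j).continuousAt
    exact Continuous.div (by unfold sqnorm frob bkt; fun_prop) (by unfold sqnorm frob; fun_prop)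
      fun t => (hN t).ne'
  have htr : ∀ t, HasDerivAt (fun s => trace (normalized (A s)))
      ((1/2) * c t * trace (normalized (A t))) t := fun t => by
    simp only [trace_normalized]
    exact ((hasDerivAt_trace_flow (hA t)).congr_deriv (by ring)).mul_rpow_neg
      (hasDerivAt_sqnorm_flow (hA t)) (hN t)
  have htr2 : ∀ t, HasDerivAt (fun s => trace (normalized (A s) * normalized (A s)))
      (c t * trace (normalized (A t) * normalized (A t))) t := fun t => by
    simp only [trace_normalized_mul_self]
    exact ((hasDerivAt_trace_mul_self_flow (hA t)).congr_deriv (by ring)).mul_rpow_neg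
      (hasDerivAt_sqnorm_flow (hA t)) (hN t) |>.congr_deriv (by ring)
  refine ⟨fun t => ?_, fun t => ?_, fun s t => ⟨?_, ?_⟩⟩
  · simpa only [mul_assoc, sqnorm_mul_sqnorm_bkt_normalized] using htr t
  · simpa only [sqnorm_mul_sqnorm_bkt_normalized] using htr2 t
  · exact Real.sign_eq_of_hasDerivAt_mul_self (hc.const_mul _) htr s t
  · exact Real.sign_eq_of_hasDerivAt_mul_self hc htr2 s t
end
end

section
/- Let F : gl_n(ℝ) → ℝ be defined by F(A) = ‖[A,Aᵗ]‖², where ‖·‖ is the Frobenius norm. Then the gradient of F with respect to the Frobenius inner product ⟨X,Y⟩ = tr(XYᵗ) is grad(F)_A = -4·[A,[A,Aᵗ]]; i.e. for all B, (d/dt)|_{t=0} F(A+tB) = ⟨-4[A,[A,Aᵗ]], B⟩. -/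
open Matrix Filter

noncomputable section

/-- The bracket of a perturbed matrix with its transpose expands as a quadratic in t. -/
lemma bkt_expand {n : ℕ} (A B : Mat n) (t : ℝ) :
    bkt (A + t • B) (A + t • B)ᵀ
      = bkt A Aᵀ + t • (bkt A Bᵀ + bkt B Aᵀ) + (t*t) • bkt B Bᵀ := by
  simp only [bkt, transpose_add, transpose_smul, add_mul, mul_add, smul_mul_assoc,
    mul_smul_comm, smul_add, smul_sub, smul_smul]
  module

/-- Polynomial expansion of the squared norm. -/
lemma sqnorm_expand {n : ℕ} (C0 D E : Mat n) (t : ℝ) :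
    sqnorm (C0 + t • D + (t*t) • E)
      = trace (C0*C0ᵀ)
        + (trace (C0*Dᵀ) + trace (D*C0ᵀ)) * t
        + (trace (C0*Eᵀ) + trace (D*Dᵀ) + trace (E*C0ᵀ)) * t^2
        + (trace (D*Eᵀ) + trace (E*Dᵀ)) * t^3
        + trace (E*Eᵀ) * t^4 := by
  simp only [sqnorm, frob, transpose_add, transpose_smul, add_mul, mul_add,
    smul_mul_assoc, mul_smul_comm, smul_smul, trace_add, trace_smul, smul_eq_mul]
  ring

/-- The linear coefficient equals the claimed gradient pairing. -/
lemma coeff_eq {n : ℕ} (A B : Mat n) :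
    trace (bkt A Aᵀ * (bkt A Bᵀ + bkt B Aᵀ)ᵀ)
      + trace ((bkt A Bᵀ + bkt B Aᵀ) * (bkt A Aᵀ)ᵀ)
      = frob ((-4 : ℝ) • bkt A (bkt A Aᵀ)) B := by
  set C0 := bkt A Aᵀ with hC0def
  set D := bkt A Bᵀ + bkt B Aᵀ with hDdef
  have hC0 : C0ᵀ = C0 := by
    rw [hC0def]; simp [bkt, transpose_sub]
  have hsym : trace (C0 * Dᵀ) = trace (C0 * D) := by
    rw [← Matrix.trace_transpose (C0 * Dᵀ), transpose_mul, transpose_transpose, hC0,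
      Matrix.trace_mul_comm]
  have h1 : trace (C0 * (Bᵀ * A)) = trace (A * C0 * Bᵀ) := by
    rw [← mul_assoc, Matrix.trace_mul_cycle]
  have h2 : trace (C0 * (B * Aᵀ)) = trace (C0 * (A * Bᵀ)) := by
    rw [← Matrix.trace_transpose (C0 * (B * Aᵀ))]
    simp only [transpose_mul, transpose_transpose, hC0]
    rw [← mul_assoc, Matrix.trace_mul_cycle, mul_assoc]
  have h3 : trace (C0 * (Aᵀ * B)) = trace (A * C0 * Bᵀ) := by
    rw [← Matrix.trace_transpose (C0 * (Aᵀ * B))]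
    simp only [transpose_mul, transpose_transpose, hC0]
    exact (Matrix.trace_mul_cycle A C0 Bᵀ).symm
  have hD : trace (C0 * D) = 2 * trace (C0 * (A * Bᵀ)) - 2 * trace (A * C0 * Bᵀ) := by
    rw [hDdef]
    simp only [bkt, mul_add, mul_sub, trace_add, trace_sub, h1, h2, h3]
    ring
  rw [hsym, hC0, Matrix.trace_mul_comm D C0, hD]
  simp only [frob, bkt, smul_mul_assoc, trace_smul, smul_eq_mul, sub_mul,
    trace_sub, mul_assoc]
  ring

theorem stmt18 {n : ℕ} (A B : Mat n) :
    HasDerivAt (fun t : ℝ => sqnorm (bkt (A + t • B) (A + t • B)ᵀ))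
      (frob ((-4 : ℝ) • bkt A (bkt A Aᵀ)) B) 0 := by
  set C0 := bkt A Aᵀ with hC0def
  set D := bkt A Bᵀ + bkt B Aᵀ with hDdef
  set E := bkt B Bᵀ with hEdef
  set a0 := trace (C0*C0ᵀ)
  set a1 := trace (C0*Dᵀ) + trace (D*C0ᵀ)
  set a2 := trace (C0*Eᵀ) + trace (D*Dᵀ) + trace (E*C0ᵀ)
  set a3 := trace (D*Eᵀ) + trace (E*Dᵀ)
  set a4 := trace (E*Eᵀ)
  have hfun : (fun t : ℝ => sqnorm (bkt (A + t • B) (A + t • B)ᵀ))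
      = fun t : ℝ => a0 + a1 * t + a2 * t^2 + a3 * t^3 + a4 * t^4 := by
    funext t
    rw [bkt_expand A B t, sqnorm_expand]
  have hpoly : HasDerivAt (fun t : ℝ => a0 + a1 * t + a2 * t^2 + a3 * t^3 + a4 * t^4)
      a1 0 := by
    have h : HasDerivAt (fun t : ℝ => a0 + a1 * t + a2 * t^2 + a3 * t^3 + a4 * t^4)
        (0 + a1 * 1 + a2 * (2 * 0^1) + a3 * (3 * 0^2) + a4 * (4 * 0^3)) 0 := by
      exact ((((hasDerivAt_const (0:ℝ) a0).add
        ((hasDerivAt_id (0:ℝ)).const_mul a1)).add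
        ((hasDerivAt_pow 2 (0:ℝ)).const_mul a2)).add
        ((hasDerivAt_pow 3 (0:ℝ)).const_mul a3)).add
        ((hasDerivAt_pow 4 (0:ℝ)).const_mul a4)
    simpa using h
  rw [hfun]
  have := coeff_eq A B
  rw [← hC0def, ← hDdef] at this
  rw [← this]
  exact hpoly
end
end
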